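/- arXiv:2404.15200 — 3 statements merged into one kernel-verified Lean document; each statement's English description precedes it below -/
import Mathlib

section
/- Let θ(Z₁,Z₂,Z₃,Z₄) be the degree-6 bicuspidal theta polynomial (as in the factorization θ = (Z₁³ − 24Z₁² + 192Z₁ + 16Z₂ − 336)(Z₃³ + 24Z₃² + 192Z₃ + 16Z₄ + 336) + 36(Z₁Z₃ + 10Z₁ − 6Z₃ − 56)(Z₁Z₃ + 6Z₁ − 10Z₃ − 56)). For real x, y, t, substitute Z₁ = 4x + 8iy + 12t + 16, Z₂ = −12t − 22, Z₃ = 4x − 8iy + 12t, Z₄ = −12t. Then the resulting value τ(x,y,t) is a real number for all real x, y, t. -/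
open Complex

/-- The degree-6 bicuspidal theta polynomial. -/
noncomputable def thetaBC (Z₁ Z₂ Z₃ Z₄ : ℂ) : ℂ :=
  (Z₁ ^ 3 - 24 * Z₁ ^ 2 + 192 * Z₁ + 16 * Z₂ - 336)
      * (Z₃ ^ 3 + 24 * Z₃ ^ 2 + 192 * Z₃ + 16 * Z₄ + 336)
    + 36 * (Z₁ * Z₃ + 10 * Z₁ - 6 * Z₃ - 56) * (Z₁ * Z₃ + 6 * Z₁ - 10 * Z₃ - 56)

/-- The tau-function of the three-lump KP1 solution. -/
noncomputable def tauBC (x y t : ℝ) : ℂ :=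
  thetaBC (4 * x + 8 * I * y + 12 * t + 16) (-12 * t - 22)
    (4 * x - 8 * I * y + 12 * t) (-12 * t)

/-!
With `w = 4x + 8iy + 12t` and `s = -12t` the substitution is `Z₁ = w + 16`, `Z₂ = s - 22`,
`Z₃ = w̄`, `Z₄ = s`. Completing the cubes, `Z³ ∓ 24Z² + 192Z ∓ 336 = (Z ∓ 8)³ ± 176`, so the two
cubic factors of `θ` become `(w + 8)³ + 16s - 176` and its complex conjugate, whose product is a
squared modulus, while the two quadratic factors become `|w|² + 20 Re w + 104` and
`|w|² + 12 Re w + 40`. Every term is therefore real.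
-/

open ComplexConjugate

theorem thetaBC_conj_eq (w : ℂ) (s : ℝ) :
    thetaBC (w + 16) (s - 22) (conj w) s =
      ((w + 8) ^ 3 + 16 * s - 176) * conj ((w + 8) ^ 3 + 16 * s - 176)
        + 36 * (normSq w + 20 * w.re + 104) * (normSq w + 12 * w.re + 40) := by
  simp only [thetaBC, map_add, map_sub, map_mul, map_pow, map_ofNat, conj_ofReal, ← mul_conj,
    re_eq_add_conj]
  ring

theorem im_thetaBC_conj (w : ℂ) (s : ℝ) :
    (thetaBC (w + 16) (s - 22) (conj w) s).im = 0 := by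
  rw [thetaBC_conj_eq, mul_conj]
  norm_cast

/-- The substituted tau-function takes only real values for real (x, y, t). -/
theorem tauBC_real (x y t : ℝ) : (tauBC x y t).im = 0 := by
  have hconj : conj (4 * x + 8 * I * y + 12 * t : ℂ) = 4 * x - 8 * I * y + 12 * t := by
    simp only [map_add, map_mul, map_ofNat, conj_ofReal, conj_I]
    ring
  have h := im_thetaBC_conj (4 * x + 8 * I * y + 12 * t) (-12 * t)
  rwa [hconj, ofReal_mul, ofReal_neg, ofReal_ofNat] at h
end

section
/- With the substitution Z₁ = 4x + 8iy + 12t + 16, Z₂ = −12t − 22, Z₃ = 4x − 8iy + 12t, Z₄ = −12t into the degree-6 bicuspidal theta polynomial θ, there exist real polynomials A(x,y,t) and B(x,y,t) such that for all real x, y, t: τ(x,y,t) = A² + B² + 36((4x + 12t + 10)² + 64y² + 4)((4x + 12t + 6)² + 64y² + 4). In particular τ(x,y,t) > 0 for all real x, y, t. -/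
open Complex

/-- The real part of the first factor of θ, as a polynomial. -/
noncomputable def ApolyBC : MvPolynomial (Fin 3) ℝ :=
  64 * MvPolynomial.X 0 ^ 3 + 576 * MvPolynomial.X 0 ^ 2 * MvPolynomial.X 2
    + 384 * MvPolynomial.X 0 ^ 2 + 1728 * MvPolynomial.X 0 * MvPolynomial.X 2 ^ 2
    + 2304 * MvPolynomial.X 0 * MvPolynomial.X 2
    - 768 * MvPolynomial.X 0 * MvPolynomial.X 1 ^ 2 + 768 * MvPolynomial.X 0
    + 1728 * MvPolynomial.X 2 ^ 3 + 3456 * MvPolynomial.X 2 ^ 2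
    - 2304 * MvPolynomial.X 1 ^ 2 * MvPolynomial.X 2 + 2112 * MvPolynomial.X 2
    - 1536 * MvPolynomial.X 1 ^ 2 + 336

/-- The imaginary part of the first factor of θ, as a polynomial. -/
noncomputable def BpolyBC : MvPolynomial (Fin 3) ℝ :=
  384 * MvPolynomial.X 0 ^ 2 * MvPolynomial.X 1
    + 2304 * MvPolynomial.X 0 * MvPolynomial.X 2 * MvPolynomial.X 1
    + 1536 * MvPolynomial.X 0 * MvPolynomial.X 1
    + 3456 * MvPolynomial.X 2 ^ 2 * MvPolynomial.X 1
    + 4608 * MvPolynomial.X 2 * MvPolynomial.X 1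
    - 512 * MvPolynomial.X 1 ^ 3 + 1536 * MvPolynomial.X 1

lemma evalA (x y t : ℝ) : MvPolynomial.eval ![x, y, t] ApolyBC =
    64*x^3 + 576*x^2*t + 384*x^2 + 1728*x*t^2 + 2304*x*t - 768*x*y^2 + 768*x
      + 1728*t^3 + 3456*t^2 - 2304*y^2*t + 2112*t - 1536*y^2 + 336 := by
  simp [ApolyBC]

lemma evalB (x y t : ℝ) : MvPolynomial.eval ![x, y, t] BpolyBC =
    384*x^2*y + 2304*x*t*y + 1536*x*y + 3456*t^2*y + 4608*t*y - 512*y^3 + 1536*y := by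
  simp [BpolyBC]

lemma tauBC_key (x y t : ℝ) :
    tauBC x y t =
      ((MvPolynomial.eval ![x, y, t] ApolyBC) ^ 2 + (MvPolynomial.eval ![x, y, t] BpolyBC) ^ 2
        + 36 * ((4 * x + 12 * t + 10) ^ 2 + 64 * y ^ 2 + 4)
            * ((4 * x + 12 * t + 6) ^ 2 + 64 * y ^ 2 + 4) : ℝ) := by
  rw [evalA, evalB]
  simp only [tauBC, thetaBC]
  push_cast
  linear_combination ((-1658880*(y:ℂ)^2) + (-7004160*(y:ℂ)^2*t) + (-12165120*(y:ℂ)^2*t^2)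
    + (-10616832*(y:ℂ)^2*t^3) + (-3981312*(y:ℂ)^2*t^4) + (-933888*(y:ℂ)^4)
    + (933888*(y:ℂ)^4*Complex.I^2) + (-2359296*(y:ℂ)^4*t) + (2359296*(y:ℂ)^4*t*Complex.I^2)
    + (-1769472*(y:ℂ)^4*t^2) + (1769472*(y:ℂ)^4*t^2*Complex.I^2) + (-262144*(y:ℂ)^6)
    + (262144*(y:ℂ)^6*Complex.I^2) + (-262144*(y:ℂ)^6*Complex.I^4) + (-2138112*(x:ℂ)*y^2)
    + (-7815168*(x:ℂ)*y^2*t) + (-10616832*(x:ℂ)*y^2*t^2) + (-5308416*(x:ℂ)*y^2*t^3)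
    + (-786432*(x:ℂ)*y^4) + (786432*(x:ℂ)*y^4*Complex.I^2) + (-1179648*(x:ℂ)*y^4*t)
    + (1179648*(x:ℂ)*y^4*t*Complex.I^2) + (-1253376*(x:ℂ)^2*y^2) + (-3538944*(x:ℂ)^2*y^2*t)
    + (-2654208*(x:ℂ)^2*y^2*t^2) + (-196608*(x:ℂ)^2*y^4) + (196608*(x:ℂ)^2*y^4*Complex.I^2)
    + (-393216*(x:ℂ)^3*y^2) + (-589824*(x:ℂ)^3*y^2*t) + (-49152*(x:ℂ)^4*y^2)) * Complex.I_sq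

/-- The tau-function of the three-lump solution is a sum of squares of real polynomials
plus a manifestly positive term; in particular it is strictly positive for real (x,y,t). -/
theorem tauBC_sum_of_squares :
    (∃ A B : MvPolynomial (Fin 3) ℝ, ∀ x y t : ℝ,
      tauBC x y t =
        ((MvPolynomial.eval ![x, y, t] A) ^ 2 + (MvPolynomial.eval ![x, y, t] B) ^ 2
          + 36 * ((4 * x + 12 * t + 10) ^ 2 + 64 * y ^ 2 + 4)
              * ((4 * x + 12 * t + 6) ^ 2 + 64 * y ^ 2 + 4) : ℝ)) ∧
    ∀ x y t : ℝ, (tauBC x y t).im = 0 ∧ 0 < (tauBC x y t).re := by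
  refine ⟨⟨ApolyBC, BpolyBC, fun x y t => tauBC_key x y t⟩, fun x y t => ?_⟩
  rw [tauBC_key x y t]
  refine ⟨Complex.ofReal_im _, ?_⟩
  rw [Complex.ofReal_re]
  positivity
end

section
/- Let P(Z₁,Z₂,Z₃,Z₄) be the polynomial obtained from the degree-6 bicuspidal theta polynomial by the substitution Z₁ = 4x + 8iy + 12t + (16 + φ₃), Z₂ = −12t + φ₂, Z₃ = 4x − 8iy + 12t + φ₃, Z₄ = −12t + φ₄, viewed as a polynomial in x, y, t with coefficients depending on real parameters φ₂, φ₃, φ₄. If φ₂ − φ₄ = −22, then the coefficients of y⁵, y³, and y (i.e., all monomials containing an odd power of y) vanish identically, so P has real coefficients as a polynomial in x, y, t. -/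
open Complex

/-- Substituting the Krichever flows with phases φ₁ = 16 + φ₃ into the bicuspidal theta
polynomial: if φ₂ − φ₄ = −22, then all terms with odd powers of y vanish, so the
result is real (and even in y) for all real x, y, t. -/
theorem phase_condition_kills_odd_y (φ₂ φ₃ φ₄ : ℝ) (hφ : φ₂ - φ₄ = -22)
    (P : ℝ → ℝ → ℝ → ℂ)
    (hP : ∀ x y t : ℝ, P x y t =
      thetaBC (4 * x + 8 * I * y + 12 * t + (16 + φ₃)) (-12 * t + φ₂)
        (4 * x - 8 * I * y + 12 * t + φ₃) (-12 * t + φ₄)) :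
    ∀ x y t : ℝ, (P x y t).im = 0 ∧ P x y t = P x (-y) t := by
  have hφ' : φ₂ = φ₄ - 22 := by linarith
  subst hφ'
  have key : ∀ x y t : ℝ, P x y t = P x (-y) t := by
    intro x y t
    rw [hP, hP]
    unfold thetaBC
    push_cast
    ring
  have cj : ∀ x y t : ℝ, (starRingEnd ℂ) (P x y t) = P x (-y) t := by
    intro x y t
    rw [hP, hP]
    unfold thetaBC
    simp only [map_add, map_mul, map_sub, map_pow, map_neg, map_ofNat, conj_I, conj_ofReal]
    push_cast
    ring
  intro x y t
  refine ⟨?_, key x y t⟩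
  have h : (starRingEnd ℂ) (P x y t) = P x y t := by rw [cj, ← key]
  exact (Complex.conj_eq_iff_im.mp h)
end
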